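/- With G₁, G₂, G₃ the Whitehead link generators, H₁ = G₃⁻¹G₁⁻¹ equals [[-1-6i,-6-4i,2+4i],[-4+6i,1+8i,2-4i],[2+4i,4+2i,-1-2i]] and is parabolic, and H'₁ = G₃G₁⁻²G₃ equals [[5,2-6i,-4],[-8-4i,-7+8i,6+2i],[-8+8i,8+12i,5-8i]] and is parabolic. -/

import Mathlib

/-!
Both products are computed entrywise. Their characteristic polynomials are `(X - 1)(X + 1)²` and
`(X - 1)³`, so every eigenvalue is `±1`. A diagonalizable matrix annihilated by `f g²` is already
annihilated by `f g`, as one sees on the diagonal form. By Cayley–Hamilton a diagonalizable `H₁`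
would therefore satisfy `(H₁ - 1)(H₁ + 1) = 0` and a diagonalizable `H₁'` would satisfy
`(H₁' - 1)² = 0`, but one entry of each of these products is nonzero.
-/

open Complex Matrix

noncomputable section

def W₁ : Matrix (Fin 3) (Fin 3) ℂ :=
  !![1, 0, -Complex.I;
     -1 - Complex.I, 1, -1 + Complex.I;
     -1 - Complex.I, 1 - Complex.I, Complex.I]

def W₃ : Matrix (Fin 3) (Fin 3) ℂ :=
  !![Complex.I, 1 + Complex.I, -Complex.I;
     1 - Complex.I, -1 - 2 * Complex.I, 2 * Complex.I;
     -1 - Complex.I, -3 + Complex.I, 3 + 2 * Complex.I]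

/-- All eigenvalues of `M` have modulus one. -/
def UnitEigenvalues (M : Matrix (Fin 3) (Fin 3) ℂ) : Prop :=
  ∀ μ : ℂ, M.charpoly.IsRoot μ → ‖μ‖ = 1

/-- `M` is diagonalizable over `ℂ`. -/
def Diagonalizable (M : Matrix (Fin 3) (Fin 3) ℂ) : Prop :=
  ∃ (P : Matrix (Fin 3) (Fin 3) ℂ) (d : Fin 3 → ℂ),
    IsUnit P.det ∧ M = P * Matrix.diagonal d * P⁻¹

/-- `M` is parabolic: all its eigenvalues have modulus one and it is not
diagonalizable. -/
def Parabolic (M : Matrix (Fin 3) (Fin 3) ℂ) : Prop :=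
  UnitEigenvalues M ∧ ¬ Diagonalizable M

open Polynomial

namespace Matrix

variable {n K : Type*} [Fintype n] [DecidableEq n] [Field K]

theorem aeval_diagonal (d : n → K) (f : K[X]) :
    aeval (diagonal d) f = diagonal fun i => f.eval (d i) := by
  rw [← diagonalAlgHom_apply (R := K), aeval_algHom_apply, aeval_pi_apply]
  rfl

theorem aeval_conj (P A : Matrix n n K) (hP : IsUnit P.det) (f : K[X]) :
    aeval (P * A * P⁻¹) f = P * aeval A f * P⁻¹ := by
  have h := aeval_algEquiv
    (MulSemiringAction.toAlgEquiv K (Matrix n n K) (ConjAct.toConjAct (nonsingInvUnit P hP))) A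
  simp only [MulSemiringAction.toAlgEquiv_apply, ConjAct.units_smul_def,
    ConjAct.ofConjAct_toConjAct] at h
  exact congrArg (· f) h

end Matrix

theorem Diagonalizable.aeval_mul_eq_zero {M : Matrix (Fin 3) (Fin 3) ℂ} (hM : Diagonalizable M)
    {f g : ℂ[X]} (h : aeval M (f * g ^ 2) = 0) : aeval M (f * g) = 0 := by
  obtain ⟨P, d, hP, rfl⟩ := hM
  have hPu : IsUnit P := (isUnit_iff_isUnit_det P).2 hP
  have hPu' : IsUnit P⁻¹ := isUnit_nonsing_inv_iff.2 hPu
  simp only [aeval_conj P _ hP, aeval_diagonal, hPu.mul_right_eq_zero, hPu'.mul_left_eq_zero,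
    diagonal_eq_zero, funext_iff, Pi.zero_apply, eval_mul, eval_pow] at h ⊢
  intro i
  rcases mul_eq_zero.1 (h i) with hf | hg
  · rw [hf, zero_mul]
  · rw [pow_eq_zero_iff two_ne_zero |>.1 hg, mul_zero]

theorem unitEigenvalues_of_charpoly_eq {M : Matrix (Fin 3) (Fin 3) ℂ} {a b : ℂ}
    (hM : M.charpoly = (X - C a) * (X - C b) ^ 2) (ha : ‖a‖ = 1) (hb : ‖b‖ = 1) :
    UnitEigenvalues M := by
  intro μ hμ
  simp only [hM, IsRoot, eval_mul, eval_pow, eval_sub, eval_X, eval_C, mul_eq_zero,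
    pow_eq_zero_iff two_ne_zero, sub_eq_zero] at hμ
  rcases hμ with rfl | rfl <;> assumption

theorem parabolic_of_charpoly_eq {M : Matrix (Fin 3) (Fin 3) ℂ} {a b : ℂ}
    (hM : M.charpoly = (X - C a) * (X - C b) ^ 2) (ha : ‖a‖ = 1) (hb : ‖b‖ = 1)
    (hab : (M - a • 1) * (M - b • 1) ≠ 0) : Parabolic M := by
  refine ⟨unitEigenvalues_of_charpoly_eq hM ha hb, fun hdiag => hab ?_⟩
  have hCH : aeval M ((X - C a) * (X - C b) ^ 2) = 0 := hM ▸ aeval_self_charpoly M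
  simpa [Algebra.algebraMap_eq_smul_one] using hdiag.aeval_mul_eq_zero hCH

def H₁ : Matrix (Fin 3) (Fin 3) ℂ :=
  !![-1 - 6 * I, -6 - 4 * I, 2 + 4 * I;
     -4 + 6 * I, 1 + 8 * I, 2 - 4 * I;
     2 + 4 * I, 4 + 2 * I, -1 - 2 * I]

def H₁' : Matrix (Fin 3) (Fin 3) ℂ :=
  !![5, 2 - 6 * I, -4;
     -8 - 4 * I, -7 + 8 * I, 6 + 2 * I;
     -8 + 8 * I, 8 + 12 * I, 5 - 8 * I]

theorem W₁_inv : W₁⁻¹ = !![-I, -1 - I, I; 1 + I, 1, 0; -1 + I, -1 + I, 1] := by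
  refine inv_eq_right_inv ?_
  ext i j
  fin_cases i <;> fin_cases j <;>
    simp [W₁, mul_apply, Fin.sum_univ_three, one_apply] <;> norm_num [Complex.ext_iff]

theorem W₃_inv_mul_W₁_inv : W₃⁻¹ * W₁⁻¹ = H₁ := by
  rw [← Matrix.mul_inv_rev]
  refine inv_eq_right_inv ?_
  ext i j
  fin_cases i <;> fin_cases j <;>
    simp [W₁, W₃, H₁, mul_apply, Fin.sum_univ_three, one_apply] <;> norm_num [Complex.ext_iff]

theorem W₃_mul_W₁_inv_sq_mul_W₃ : W₃ * W₁⁻¹ ^ 2 * W₃ = H₁' := by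
  rw [W₁_inv, sq]
  ext i j
  fin_cases i <;> fin_cases j <;>
    simp [W₃, H₁', mul_apply, Fin.sum_univ_three] <;> norm_num [Complex.ext_iff]

theorem charpoly_H₁ : H₁.charpoly = (X - C 1) * (X - C (-1)) ^ 2 := by
  refine Polynomial.funext fun μ => ?_
  rw [eval_charpoly, det_fin_three]
  simp only [scalar_apply, H₁, Fin.isValue, Matrix.sub_apply, diagonal_apply_eq, of_apply, cons_val',
    cons_val_zero, cons_val_fin_one, cons_val_one, cons_val, ne_eq, Fin.reduceEq, not_false_eq_true,
    diagonal_apply_ne, zero_sub, neg_sub, neg_add_rev, zero_ne_one, sub_neg_eq_add, one_ne_zero,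
    neg_neg, map_one, map_neg, eval_mul, eval_sub, eval_X, eval_one, eval_pow, eval_add]
  ring_nf
  simp only [I_sq, I_pow_three]
  ring

theorem charpoly_H₁' : H₁'.charpoly = (X - C 1) * (X - C 1) ^ 2 := by
  refine Polynomial.funext fun μ => ?_
  rw [eval_charpoly, det_fin_three]
  simp only [scalar_apply, H₁', Fin.isValue, Matrix.sub_apply, diagonal_apply_eq, of_apply, cons_val',
    cons_val_zero, cons_val_fin_one, cons_val_one, cons_val, ne_eq, Fin.reduceEq, not_false_eq_true,
    diagonal_apply_ne, zero_sub, neg_add_rev, zero_ne_one, neg_sub, one_ne_zero, sub_neg_eq_add,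
    neg_neg, zero_add, map_one, eval_mul, eval_sub, eval_X, eval_one, eval_pow]
  ring_nf
  simp only [I_sq, I_pow_three]
  ring

theorem parabolic_H₁ : Parabolic H₁ := by
  refine parabolic_of_charpoly_eq charpoly_H₁ (by simp) (by simp) fun h => ?_
  have h01 := congrFun (congrFun h 0) 1
  simp [H₁, mul_apply, Fin.sum_univ_three, one_apply] at h01
  norm_num [Complex.ext_iff] at h01

theorem parabolic_H₁' : Parabolic H₁' := by
  refine parabolic_of_charpoly_eq charpoly_H₁' (by simp) (by simp) fun h => ?_
  have h00 := congrFun (congrFun h 0) 0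
  simp [H₁', mul_apply, Fin.sum_univ_three, one_apply] at h00
  norm_num [Complex.ext_iff] at h00

/-- The Whitehead link boundary holonomy elements `H₁ = G₃⁻¹G₁⁻¹` and
`H'₁ = G₃G₁⁻²G₃` are the stated matrices and are parabolic. -/
theorem whitehead_torus_holonomy :
    (W₃⁻¹ * W₁⁻¹ =
      !![-1 - 6 * Complex.I, -6 - 4 * Complex.I, 2 + 4 * Complex.I;
         -4 + 6 * Complex.I, 1 + 8 * Complex.I, 2 - 4 * Complex.I;
         2 + 4 * Complex.I, 4 + 2 * Complex.I, -1 - 2 * Complex.I] ∧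
      Parabolic (W₃⁻¹ * W₁⁻¹)) ∧
    (W₃ * (W₁⁻¹) ^ 2 * W₃ =
      !![5, 2 - 6 * Complex.I, -4;
         -8 - 4 * Complex.I, -7 + 8 * Complex.I, 6 + 2 * Complex.I;
         -8 + 8 * Complex.I, 8 + 12 * Complex.I, 5 - 8 * Complex.I] ∧
      Parabolic (W₃ * (W₁⁻¹) ^ 2 * W₃)) := by
  rw [W₃_inv_mul_W₁_inv, W₃_mul_W₁_inv_sq_mul_W₃]
  exact ⟨⟨rfl, parabolic_H₁⟩, ⟨rfl, parabolic_H₁'⟩⟩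

end
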